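/- Let A be a noetherian commutative ring graded by an abelian group ι, and let I be a homogeneous ideal of A. Then I admits a minimal G-primary decomposition: there exist finitely many (possibly zero) G-primary homogeneous ideals Q₁, …, Q_r of A such that I = Q₁ ∩ ⋯ ∩ Q_r, the ideals (√Q₁)*, …, (√Q_r)* are pairwise distinct, and for each i the intersection ⋂_{j ≠ i} Q_j is not contained in Q_i. -/

import Mathlib

/-!
Take a primary decomposition `I = ⋂ Qᵢ` in the noetherian ring `A` (Lasker–Noether). Since `I`
is homogeneous, it is also the intersection of the homogeneous cores `Qᵢ*`, and the core of a
primary ideal is `G`-primary: the homogeneous elements of `√Q` have their powers in `Q*`, so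
`(√Q)* ⊆ √(Q*)`. Two `G`-primary ideals with the same `G`-radical intersect to a `G`-primary
ideal with that `G`-radical, so merging the components along their `G`-radicals and then
discarding redundant components gives a minimal decomposition.
-/

/-- A homogeneous ideal `Q` of a graded ring `A` is `G`-primary if `Q ≠ A` and for all
homogeneous ideals `I`, `J` with `I·J ⊆ Q` and `J ⊄ Q`, one has `I ⊆ (√Q)*`. -/
def Ideal.IsGPrimary {ι : Type*} [AddCommGroup ι] [DecidableEq ι] {A : Type*} [CommRing A]
    (𝒜 : ι → AddSubgroup A) [GradedRing 𝒜] (Q : Ideal A) : Prop :=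
  Q ≠ ⊤ ∧ ∀ I J : Ideal A, I.IsHomogeneous 𝒜 → J.IsHomogeneous 𝒜 →
    I * J ≤ Q → ¬ J ≤ Q → I ≤ (Q.radical.homogeneousCore 𝒜).toIdeal

theorem Finset.exists_inf_eq_injOn {α β : Type*} [SemilatticeInf α] [OrderTop α]
    {P : α → Prop} (f : α → β) (hP : ∀ a b, P a → P b → f a = f b → P (a ⊓ b))
    (hf : ∀ a b, f a = f b → f (a ⊓ b) = f a) (s : Finset α) (hs : ∀ a ∈ s, P a) :
    ∃ t : Finset α, t.inf id = s.inf id ∧ (∀ a ∈ t, P a) ∧ Set.InjOn f t := by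
  classical
  induction s using Finset.induction_on with
  | empty => exact ⟨∅, rfl, by simp, by simp⟩
  | insert a s _ ih =>
    obtain ⟨t, ht, htP, htf⟩ := ih fun b hb => hs b (mem_insert_of_mem hb)
    have ha : P a := hs a (mem_insert_self a s)
    rw [inf_insert, ← ht]
    by_cases hmerge : ∃ b ∈ t, f b = f a
    · obtain ⟨b, hb, hba⟩ := hmerge
      refine ⟨insert (a ⊓ b) (t.erase b), ?_, ?_, ?_⟩
      · conv_rhs => rw [← insert_erase hb]
        simp only [inf_insert, id_eq, inf_assoc]
      · simp only [mem_insert, mem_erase]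
        rintro c (rfl | ⟨-, hc⟩)
        exacts [hP a b ha (htP b hb) hba.symm, htP c hc]
      · rw [coe_insert, coe_erase, Set.injOn_iff_pairwise_ne]
        refine (htf.mono Set.sdiff_subset).pairwise_ne.insert fun c hc _ => ?_
        have hcb : f c ≠ f b := fun h => hc.2 (htf hc.1 hb h)
        rw [hf a b hba.symm, ← hba]
        exact ⟨hcb.symm, hcb⟩
    · push Not at hmerge
      refine ⟨insert a t, inf_insert, ?_, ?_⟩
      · simpa [ha] using htP
      · rw [coe_insert, Set.injOn_insert fun h => hmerge a h rfl]
        exact ⟨htf, fun ⟨c, hc, hca⟩ => hmerge c hc hca⟩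

namespace Ideal

section HomogeneousCore

variable {ι σ A : Type*} [DecidableEq ι] [AddMonoid ι] [CommSemiring A] [SetLike σ A]
  [AddSubmonoidClass σ A] (𝒜 : ι → σ) [GradedRing 𝒜]

theorem le_toIdeal_homogeneousCore {I J : Ideal A} (hI : I.IsHomogeneous 𝒜) (h : I ≤ J) :
    I ≤ (J.homogeneousCore 𝒜).toIdeal :=
  hI.toIdeal_homogeneousCore_eq_self ▸ homogeneousCore_mono 𝒜 h

theorem toIdeal_homogeneousCore_finset_inf {κ : Type*} (s : Finset κ) (f : κ → Ideal A) :
    ((s.inf f).homogeneousCore 𝒜).toIdeal = s.inf fun k => ((f k).homogeneousCore 𝒜).toIdeal :=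
  Finset.apply_inf_eq_inf_comp (fun J : Ideal A => (J.homogeneousCore 𝒜).toIdeal)
    (fun J K => by rw [(homogeneousCore.gc 𝒜).u_inf, HomogeneousIdeal.toIdeal_inf])
    (by rw [(homogeneousCore.gc 𝒜).u_top, HomogeneousIdeal.toIdeal_top])

theorem toIdeal_homogeneousCore_radical_le (Q : Ideal A) :
    (Q.radical.homogeneousCore 𝒜).toIdeal ≤ (Q.homogeneousCore 𝒜).toIdeal.radical := by
  refine span_le.mpr ?_
  rintro _ ⟨⟨x, i, hx⟩, ⟨n, hn⟩, rfl⟩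
  exact ⟨n, mem_homogeneousCore_of_homogeneous_of_mem ⟨n • i, SetLike.pow_mem_graded n hx⟩ hn⟩

theorem homogeneousCore_radical_inf {Q₁ Q₂ : Ideal A}
    (h : Q₁.radical.homogeneousCore 𝒜 = Q₂.radical.homogeneousCore 𝒜) :
    (Q₁ ⊓ Q₂).radical.homogeneousCore 𝒜 = Q₁.radical.homogeneousCore 𝒜 := by
  rw [radical_inf, (homogeneousCore.gc 𝒜).u_inf, ← h, inf_idem]

end HomogeneousCore

section GPrimary

variable {ι : Type*} [AddCommGroup ι] [DecidableEq ι] {A : Type*} [CommRing A]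
  {𝒜 : ι → AddSubgroup A} [GradedRing 𝒜]

theorem IsPrimary.isGPrimary_homogeneousCore {Q : Ideal A} (hQ : Q.IsPrimary) :
    IsGPrimary 𝒜 (Q.homogeneousCore 𝒜).toIdeal := by
  obtain ⟨hQ_ne_top, hQ_mem⟩ := isPrimary_iff.mp hQ
  refine ⟨ne_top_of_le_ne_top hQ_ne_top (toIdeal_homogeneousCore_le 𝒜 Q), ?_⟩
  intro I J hI hJ hIJ hJQ
  obtain ⟨y, hyJ, hyQ⟩ := SetLike.not_le_iff_exists.mp
    fun h => hJQ (le_toIdeal_homogeneousCore 𝒜 hJ h)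
  have hI_rad : I ≤ Q.radical := fun x hx => by
    have hyx : y * x ∈ Q :=
      mul_comm x y ▸ toIdeal_homogeneousCore_le 𝒜 Q (hIJ (mul_mem_mul hx hyJ))
    exact (hQ_mem hyx).resolve_left hyQ
  exact le_toIdeal_homogeneousCore 𝒜 hI
    ((le_toIdeal_homogeneousCore 𝒜 hI hI_rad).trans (toIdeal_homogeneousCore_radical_le 𝒜 Q))

theorem IsGPrimary.inf {Q₁ Q₂ : Ideal A} (h₁ : IsGPrimary 𝒜 Q₁) (h₂ : IsGPrimary 𝒜 Q₂)
    (h : Q₁.radical.homogeneousCore 𝒜 = Q₂.radical.homogeneousCore 𝒜) :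
    IsGPrimary 𝒜 (Q₁ ⊓ Q₂) := by
  refine ⟨ne_top_of_le_ne_top h₁.1 inf_le_left, fun I J hI hJ hIJ hJQ => ?_⟩
  rw [homogeneousCore_radical_inf 𝒜 h]
  by_cases hJ₁ : J ≤ Q₁
  · rw [h]
    exact h₂.2 I J hI hJ (hIJ.trans inf_le_right) fun hJ₂ => hJQ (le_inf hJ₁ hJ₂)
  · exact h₁.2 I J hI hJ (hIJ.trans inf_le_left) hJ₁

theorem exists_finset_gPrimary_decomposition [IsNoetherianRing A] {I : Ideal A}
    (hI : I.IsHomogeneous 𝒜) :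
    ∃ t : Finset (Ideal A), t.inf id = I ∧ (∀ J ∈ t, J.IsHomogeneous 𝒜 ∧ IsGPrimary 𝒜 J) ∧
      Set.InjOn (fun J : Ideal A => J.radical.homogeneousCore 𝒜) t := by
  obtain ⟨s, hs, hs_primary⟩ := Submodule.isLasker A A I
  have hs_core : (s.image fun J : Ideal A => (J.homogeneousCore 𝒜).toIdeal).inf id = I := by
    rw [Finset.inf_image, ← hI.toIdeal_homogeneousCore_eq_self, ← hs,
      toIdeal_homogeneousCore_finset_inf]
    rfl
  have hs_gPrimary : ∀ J ∈ s.image fun J : Ideal A => (J.homogeneousCore 𝒜).toIdeal,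
      J.IsHomogeneous 𝒜 ∧ IsGPrimary 𝒜 J := by
    simp only [Finset.mem_image, forall_exists_index, and_imp, forall_apply_eq_imp_iff₂]
    exact fun J hJ => ⟨(J.homogeneousCore 𝒜).isHomogeneous,
      IsPrimary.isGPrimary_homogeneousCore (hs_primary hJ)⟩
  obtain ⟨t, ht, ht_gPrimary, ht_inj⟩ := Finset.exists_inf_eq_injOn
    (fun J : Ideal A => J.radical.homogeneousCore 𝒜)
    (fun _ _ h₁ h₂ h => ⟨h₁.1.inf h₂.1, h₁.2.inf h₂.2 h⟩)
    (fun _ _ => homogeneousCore_radical_inf 𝒜) _ hs_gPrimary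
  exact ⟨t, ht.trans hs_core, ht_gPrimary, ht_inj⟩

end GPrimary

end Ideal

/-- Every homogeneous ideal `I` of a noetherian graded ring admits a minimal `G`-primary
decomposition: there are finitely many (possibly zero) `G`-primary homogeneous ideals
`Q 0, …, Q (r-1)` such that `I = ⋂ i, Q i`, the `G`-radicals `(√(Q i))*` are pairwise
distinct, and for each `i` the intersection `⋂_{j ≠ i} Q j` is not contained in `Q i`. -/
theorem Ideal.exists_minimal_gPrimary_decomposition {ι : Type*} [AddCommGroup ι]
    [DecidableEq ι] {A : Type*} [CommRing A] [IsNoetherianRing A]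
    (𝒜 : ι → AddSubgroup A) [GradedRing 𝒜] (I : Ideal A) (hI : I.IsHomogeneous 𝒜) :
    ∃ (r : ℕ) (Q : Fin r → Ideal A),
      (∀ i, (Q i).IsHomogeneous 𝒜 ∧ (Q i).IsGPrimary 𝒜) ∧
      I = ⨅ i, Q i ∧
      (∀ i j, ((Q i).radical.homogeneousCore 𝒜).toIdeal
          = ((Q j).radical.homogeneousCore 𝒜).toIdeal → i = j) ∧
      (∀ i, ¬ (⨅ j, ⨅ (_ : j ≠ i), Q j) ≤ Q i) := by
  obtain ⟨t, ht, ht_gPrimary, ht_inj⟩ := Ideal.exists_finset_gPrimary_decomposition hI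
  obtain ⟨u, hut, hu, hu_min⟩ := Submodule.decomposition_erase_inf ht
  obtain ⟨r, Q, hQ_inj, hQ_range⟩ := u.finite_toSet.fin_param
  have hQ_mem : ∀ i, Q i ∈ u := fun i => Finset.mem_coe.mp (hQ_range ▸ Set.mem_range_self i)
  refine ⟨r, Q, fun i => ht_gPrimary _ (hut (hQ_mem i)), ?_, fun i j h => ?_, fun i hle => ?_⟩
  · rw [← hu, Finset.inf_id_eq_sInf, ← hQ_range, sInf_range]
  · exact hQ_inj (ht_inj (hut (hQ_mem i)) (hut (hQ_mem j)) (HomogeneousIdeal.toIdeal_injective h))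
  · refine hu_min (hQ_mem i) (le_trans ?_ hle)
    exact le_iInf₂ fun j hj => Finset.inf_le (Finset.mem_erase.mpr ⟨hQ_inj.ne hj, hQ_mem j⟩)
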